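/- With F(v) = (a·v + √Q·b)²/(σ² + a²(P − v²)), the set {v : 0 ≤ v ≤ √P, F(v) ≥ ρ} is nonempty if and only if (√P·a + √Q·b)²/σ² ≥ ρ. -/

import Mathlib

/-!
On `[0, √P]` the numerator `(a v + c)²` of `F` is largest and its denominator
`σ² + a² (P - v²)` smallest at full power `v = √P`, where `F` equals `(√P a + c)² / σ²`.
So this value is the maximum of `F`, and the feasible set is nonempty exactly when it reaches `ρ`.
-/

open Real

noncomputable def sinr (a c P σ2 v : ℝ) : ℝ :=
  (a * v + c) ^ 2 / (σ2 + a ^ 2 * (P - v ^ 2))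

theorem sinr_sqrt {a c P : ℝ} (σ2 : ℝ) (hP : 0 ≤ P) :
    sinr a c P σ2 (√P) = (√P * a + c) ^ 2 / σ2 := by
  rw [sinr, sq_sqrt hP, sub_self, mul_zero, add_zero, mul_comm a]

theorem sinr_le_sinr_sqrt {a c P σ2 v : ℝ} (ha : 0 ≤ a) (hc : 0 ≤ c) (hP : 0 ≤ P)
    (hσ : 0 < σ2) (hv0 : 0 ≤ v) (hvP : v ≤ √P) :
    sinr a c P σ2 v ≤ sinr a c P σ2 (√P) := by
  have hv2 : v ^ 2 ≤ P := by
    calc v ^ 2 ≤ √P ^ 2 := by gcongr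
      _ = P := sq_sqrt hP
  have hden : σ2 ≤ σ2 + a ^ 2 * (P - v ^ 2) :=
    le_add_of_nonneg_right (mul_nonneg (sq_nonneg a) (sub_nonneg.mpr hv2))
  have hnum : a * v + c ≤ √P * a + c := by
    rw [mul_comm (√P)]
    gcongr
  rw [sinr_sqrt σ2 hP, sinr]
  calc (a * v + c) ^ 2 / (σ2 + a ^ 2 * (P - v ^ 2)) ≤ (a * v + c) ^ 2 / σ2 :=
        div_le_div_of_nonneg_left (sq_nonneg _) hσ hden
    _ ≤ (√P * a + c) ^ 2 / σ2 := by gcongr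

theorem stmt_8_general (a b P Q σ2 ρ : ℝ) (ha : 0 < a) (hb : 0 < b) (hP : 0 < P)
    (hσ : 0 < σ2)
    (F : ℝ → ℝ)
    (hF : ∀ v : ℝ, F v =
      (a * v + Real.sqrt Q * b) ^ 2 / (σ2 + a ^ 2 * (P - v ^ 2))) :
    {v : ℝ | 0 ≤ v ∧ v ≤ Real.sqrt P ∧ F v ≥ ρ}.Nonempty ↔
      (Real.sqrt P * a + Real.sqrt Q * b) ^ 2 / σ2 ≥ ρ := by
  obtain rfl : F = sinr a (√Q * b) P σ2 := funext hF
  rw [← sinr_sqrt σ2 hP.le]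
  constructor
  · rintro ⟨v, hv0, hvP, hFv⟩
    exact hFv.trans
      (sinr_le_sinr_sqrt ha.le (by positivity) hP.le hσ hv0 hvP)
  · intro h
    exact ⟨√P, sqrt_nonneg P, le_rfl, h⟩

/-- Feasibility of the single-variable reformulation of (P-S4):
`{v : 0 ≤ v ≤ √P, F(v) ≥ ρ}` is nonempty iff `(√P a + √Q b)² / σ² ≥ ρ`. -/
theorem stmt_8 (a b P Q σ2 ρ : ℝ) (ha : 0 < a) (hb : 0 < b) (hP : 0 < P)
    (hQ : 0 < Q) (hσ : 0 < σ2) (hρ : 0 < ρ)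
    (F : ℝ → ℝ)
    (hF : ∀ v : ℝ, F v =
      (a * v + Real.sqrt Q * b) ^ 2 / (σ2 + a ^ 2 * (P - v ^ 2))) :
    {v : ℝ | 0 ≤ v ∧ v ≤ Real.sqrt P ∧ F v ≥ ρ}.Nonempty ↔
      (Real.sqrt P * a + Real.sqrt Q * b) ^ 2 / σ2 ≥ ρ :=
  stmt_8_general a b P Q σ2 ρ ha hb hP hσ F hF
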